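/- Let C be a parsummable category and let φ, ψ : {1,2} × ℕ → ℕ be two injections, with φ^*(C) and ψ^*(C) the associated symmetric monoidal structures on C (with tensor products φ_* and ψ_*, unit object 0, and associativity, symmetry and unit isomorphisms defined from the parsummable structure). Then the identity functor of C, equipped with the natural isomorphisms [ψ,φ]^{x,y} : φ_*(x,y) → ψ_*(x,y) as monoidal structure morphisms and the identity of 0 as unit morphism, is a strong symmetric monoidal functor from φ^*(C) to ψ^*(C): the isomorphisms [ψ,φ]^{x,y} are compatible with the unit, associativity and symmetry isomorphisms of the two symmetric monoidal structures. -/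

import Mathlib

/-!
Every structure map in sight is a twist `[ψ, φ]^{x₁,…,x_m} = Σᵢ [ψⁱ, φⁱ]^{xᵢ}` between two
families of injections with disjoint ranges, up to the strict identifications of objects
coming from `u • (a + b) = u • a + u • b`, `u • (v • a) = (u v) • a` and strict associativity.
Applying `u_*` or `[v, u]` to a twist again gives a twist (for the composite injections),
twists compose by `[w, v] ∘ [v, u] = [w, u]`, and `ι(u, 0)` is the identity. Hence the two
paths around each coherence diagram are twists between the same two families of injections:
for associativity both are `[ψ(1 ⊔ ψ), φ(φ ⊔ 1)]^{x,y,z}`, and for the symmetry both are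
`[ψ ∘ t, φ]^{x,y}`.
-/

open CategoryTheory

/-- The monoid of injective self-maps of `U`, under composition. -/
def Minj (U : Type*) : Submonoid (Function.End U) where
  carrier := {f | Function.Injective f}
  mul_mem' := fun hf hg => hf.comp hg
  one_mem' := Function.injective_id

instance (U : Type*) : FunLike (Minj U) U U where
  coe u := u.1
  coe_injective := fun _ _ h => Subtype.ext h

@[simp] lemma Minj.mul_apply {U : Type*} (u v : Minj U) (a : U) : (u * v) a = u (v a) := rfl

/-- `x` is supported on `A` if every injection fixing `A` elementwise fixes `x`. -/
def Supported {U : Type*} {X : Type*} [MulAction (Minj U) X] (A : Set U) (x : X) : Prop :=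
  ∀ u : Minj U, (∀ a ∈ A, u a = a) → u • x = x

/-- `x` is finitely supported if it is supported on some finite subset of `U`. -/
def FinSupported {U : Type*} {X : Type*} [MulAction (Minj U) X] (x : X) : Prop :=
  ∃ A : Finset U, Supported (A : Set U) x

/-- The support of `x`: the intersection of all finite subsets of `U` on which `x`
is supported. -/
def supp {U : Type*} {X : Type*} [MulAction (Minj U) X] (x : X) : Set U :=
  {i : U | ∀ A : Finset U, Supported (A : Set U) x → i ∈ A}

/-- An `M(U)`-category: a category with an action of the injection monoid on objects,
together with coherent isomorphisms `ι u x : x ≅ u • x`. The action of `u` on morphisms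
is then given by conjugation with these isomorphisms. -/
structure MCat (U : Type*) (C : Type*) [Category C] [MulAction (Minj U) C] where
  ι : ∀ (u : Minj U) (x : C), x ≅ u • x
  ι_mul : ∀ (u v : Minj U) (x : C),
    (ι u x).hom ≫ (ι v (u • x)).hom = (ι (v * u) x).hom ≫ eqToHom (mul_smul v u x)

namespace MCat

variable {U : Type*} {C : Type*} [Category C] [MulAction (Minj U) C]

/-- The action `u_*` of an injection on morphisms: `u_*(f) = ι(u,y) ∘ f ∘ ι(u,x)⁻¹`. -/
def act (h : MCat U C) (u : Minj U) {x y : C} (f : x ⟶ y) : u • x ⟶ u • y :=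
  (h.ι u x).inv ≫ f ≫ (h.ι u y).hom

/-- The natural isomorphism `[v,u]^x := ι(v,x) ∘ ι(u,x)⁻¹ : u • x ⟶ v • x`. -/
def tw (h : MCat U C) (v u : Minj U) (x : C) : u • x ⟶ v • x :=
  (h.ι u x).inv ≫ (h.ι v x).hom

@[simp] lemma act_id (h : MCat U C) (u : Minj U) (x : C) : h.act u (𝟙 x) = 𝟙 (u • x) := by
  simp [act]

@[simp] lemma act_comp (h : MCat U C) (u : Minj U) {x y z : C} (f : x ⟶ y) (g : y ⟶ z) :
    h.act u (f ≫ g) = h.act u f ≫ h.act u g := by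
  simp [act]

lemma ι_natural (h : MCat U C) (u : Minj U) {x y : C} (f : x ⟶ y) :
    (h.ι u x).hom ≫ h.act u f = f ≫ (h.ι u y).hom := by
  simp [act]

end MCat

section ExtensionLemma

/-- Any map that is injective on a finite subset of `ℕ` agrees on that subset with a
permutation of `ℕ`. -/
lemma exists_perm_extend (s : Finset ℕ) (f : ℕ → ℕ) (hf : Set.InjOn f ↑s) :
    ∃ e : Equiv.Perm ℕ, ∀ a ∈ s, e a = f a := by
  classical
  have hSfin : (↑s : Set ℕ).Finite := s.finite_toSet
  have hTfin : (f '' ↑s).Finite := hSfin.image f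
  haveI : Infinite ↥(↑s : Set ℕ)ᶜ := hSfin.infinite_compl.to_subtype
  haveI : Infinite ↥(f '' ↑s)ᶜ := hTfin.infinite_compl.to_subtype
  obtain ⟨e₂⟩ : Nonempty (↥(↑s : Set ℕ)ᶜ ≃ ↥(f '' ↑s)ᶜ) := nonempty_equiv_of_countable
  let e₁ : ↥(↑s : Set ℕ) ≃ ↥(f '' ↑s) := Equiv.Set.imageOfInjOn f ↑s hf
  refine ⟨(Equiv.Set.sumCompl (↑s : Set ℕ)).symm.trans
    ((e₁.sumCongr e₂).trans (Equiv.Set.sumCompl (f '' ↑s))), fun a ha => ?_⟩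
  have ha' : a ∈ (↑s : Set ℕ) := ha
  have h3 : (Equiv.Set.sumCompl (↑s : Set ℕ)).symm a = Sum.inl ⟨a, ha'⟩ :=
    Equiv.Set.sumCompl_symm_apply_of_mem ha'
  simp only [Equiv.trans_apply, h3, Equiv.sumCongr_apply, Sum.map_inl,
    Equiv.Set.sumCompl_apply_inl]
  rfl

variable {X : Type*} [MulAction (Minj ℕ) X]

/-- Two injections agreeing on a finite supporting set act in the same way. -/
lemma smul_eq_smul_of_eqOn {x : X} {A : Finset ℕ}
    (hA : Supported (A : Set ℕ) x) {v w : Minj ℕ} (hvw : ∀ a ∈ A, v a = w a) :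
    v • x = w • x := by
  classical
  set f : ℕ → ℕ := fun b => if hb : b ∈ A.image ⇑v then (Finset.mem_image.mp hb).choose else b
    with hfdef
  have hspec : ∀ b ∈ A.image ⇑v, f b ∈ A ∧ v (f b) = b := by
    intro b hb
    have h1 := (Finset.mem_image.mp hb).choose_spec
    simp only [hfdef, dif_pos hb]
    exact h1
  have hinj : Set.InjOn f ↑(A.image ⇑v) := by
    intro b₁ hb₁ b₂ hb₂ hb
    have h1 := hspec b₁ hb₁
    have h2 := hspec b₂ hb₂
    rw [← h1.2, ← h2.2, hb]
  obtain ⟨e, he⟩ := exists_perm_extend (A.image ⇑v) f hinj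
  have heva : ∀ a ∈ A, e (v a) = a := by
    intro a ha
    have hmem : v a ∈ A.image ⇑v := Finset.mem_image_of_mem _ ha
    have h1 := hspec _ hmem
    have : e (v a) = f (v a) := he _ hmem
    rw [this]
    exact v.2 h1.2
  let γ : Minj ℕ := ⟨(e : ℕ → ℕ), e.injective⟩
  let γ' : Minj ℕ := ⟨(e.symm : ℕ → ℕ), e.symm.injective⟩
  have hγ : γ' * γ = 1 := Subtype.ext (funext fun n => e.symm_apply_apply n)
  have h1 : (γ * v) • x = x := hA (γ * v) (fun a ha => heva a ha)
  have h2 : (γ * w) • x = x := hA (γ * w) (fun a ha => by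
    show e (w a) = a
    rw [← hvw a ha]
    exact heva a ha)
  calc v • x = ((γ' * γ) * v) • x := by rw [hγ, one_mul]
    _ = γ' • ((γ * v) • x) := by rw [mul_assoc, mul_smul γ' (γ * v) x]
    _ = γ' • ((γ * w) • x) := by rw [h1, h2]
    _ = ((γ' * γ) * w) • x := by rw [mul_assoc, mul_smul γ' (γ * w) x]
    _ = w • x := by rw [hγ, one_mul]

/-- If `x` is supported on the finite set `A`, then `w • x` is supported on `w(A)`. -/
lemma supported_image {x : X} {A : Finset ℕ}
    (hA : Supported (A : Set ℕ) x) (w : Minj ℕ) :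
    Supported ((A.image ⇑w : Finset ℕ) : Set ℕ) (w • x) := by
  intro u hu
  rw [← mul_smul]
  exact smul_eq_smul_of_eqOn hA (fun a ha => hu (w a) (by
    exact_mod_cast Finset.mem_image_of_mem _ ha))

lemma supp_subset_of_supported {x : X} {A : Finset ℕ}
    (hA : Supported (A : Set ℕ) x) : supp (U := ℕ) x ⊆ ↑A :=
  fun _ hi => hi A hA

end ExtensionLemma

/-- Two elements are disjointly supported if their supports are disjoint. -/
def DisjSupp {X : Type*} [MulAction (Minj ℕ) X] (x y : X) : Prop :=
  Disjoint (supp (U := ℕ) x) (supp (U := ℕ) y)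

/-- A parsummable category: a tame `M(ℕ)`-category together with a distinguished object `0`
supported on the empty set and a sum operation, defined on disjointly supported objects and
morphisms, which is strictly unital, associative and commutative and strictly commutes with
the `M(ℕ)`-action. -/
structure ParSum (C : Type*) [Category C] [MulAction (Minj ℕ) C] extends MCat ℕ C where
  tame : ∀ x : C, FinSupported (U := ℕ) x
  zero : C
  supp_zero : Supported (∅ : Set ℕ) zero
  add : C → C → C
  addHom : ∀ {x x' y y' : C}, DisjSupp x x' → DisjSupp y y' →
    (x ⟶ y) → (x' ⟶ y') → (add x x' ⟶ add y y')
  addHom_id : ∀ {x x' : C} (h : DisjSupp x x'), addHom h h (𝟙 x) (𝟙 x') = 𝟙 (add x x')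
  addHom_comp : ∀ {x y z x' y' z' : C} (hx : DisjSupp x x') (hy : DisjSupp y y')
    (hz : DisjSupp z z') (f : x ⟶ y) (g : y ⟶ z) (f' : x' ⟶ y') (g' : y' ⟶ z'),
    addHom hx hz (f ≫ g) (f' ≫ g') = addHom hx hy f f' ≫ addHom hy hz g g'
  add_zero' : ∀ x : C, add x zero = x
  zero_add' : ∀ x : C, add zero x = x
  addHom_zero : ∀ {x y : C} (hx : DisjSupp x zero) (hy : DisjSupp y zero) (f : x ⟶ y),
    addHom hx hy f (𝟙 zero) = eqToHom (add_zero' x) ≫ f ≫ eqToHom (add_zero' y).symm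
  zero_addHom : ∀ {x y : C} (hx : DisjSupp zero x) (hy : DisjSupp zero y) (f : x ⟶ y),
    addHom hx hy (𝟙 zero) f = eqToHom (zero_add' x) ≫ f ≫ eqToHom (zero_add' y).symm
  add_comm' : ∀ {x y : C}, DisjSupp x y → add x y = add y x
  addHom_comm : ∀ {x y x' y' : C} (hx : DisjSupp x x') (hy : DisjSupp y y')
    (hx' : DisjSupp x' x) (hy' : DisjSupp y' y) (f : x ⟶ y) (f' : x' ⟶ y'),
    addHom hx' hy' f' f = eqToHom (add_comm' hx).symm ≫ addHom hx hy f f' ≫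
      eqToHom (add_comm' hy)
  add_assoc' : ∀ {x y z : C}, DisjSupp x y → DisjSupp y z → DisjSupp x z →
    add (add x y) z = add x (add y z)
  addHom_assoc : ∀ {x y z x' y' z' : C}
    (hxy : DisjSupp x y) (hyz : DisjSupp y z) (hxz : DisjSupp x z)
    (hxy' : DisjSupp x' y') (hyz' : DisjSupp y' z') (hxz' : DisjSupp x' z')
    (hs : DisjSupp (add x y) z) (hs' : DisjSupp (add x' y') z')
    (ht : DisjSupp x (add y z)) (ht' : DisjSupp x' (add y' z'))
    (f : x ⟶ x') (g : y ⟶ y') (k : z ⟶ z'),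
    addHom hs hs' (addHom hxy hxy' f g) k =
      eqToHom (add_assoc' hxy hyz hxz) ≫ addHom ht ht' f (addHom hyz hyz' g k) ≫
        eqToHom (add_assoc' hxy' hyz' hxz').symm
  smul_add : ∀ (u : Minj ℕ) {x y : C}, DisjSupp x y → u • add x y = add (u • x) (u • y)
  act_add : ∀ (u : Minj ℕ) {x x' y y' : C} (hx : DisjSupp x x') (hy : DisjSupp y y')
    (hux : DisjSupp (u • x) (u • x')) (huy : DisjSupp (u • y) (u • y'))
    (f : x ⟶ y) (f' : x' ⟶ y'),
    toMCat.act u (addHom hx hy f f') =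
      eqToHom (smul_add u hx) ≫ addHom hux huy (toMCat.act u f) (toMCat.act u f') ≫
        eqToHom (smul_add u hy).symm
  ι_add : ∀ (u : Minj ℕ) {x y : C} (hxy : DisjSupp x y) (hu : DisjSupp (u • x) (u • y)),
    (toMCat.ι u (add x y)).hom =
      addHom hxy hu (toMCat.ι u x).hom (toMCat.ι u y).hom ≫ eqToHom (smul_add u hxy).symm

section Phi

variable {C : Type*} [Category C] [MulAction (Minj ℕ) C]

/-- The component `φ^i = φ(i,-)` of an injection `φ : {1,2} × ℕ → ℕ`, as an element
of `M(ℕ)`. -/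
def phiC (φ : Fin 2 × ℕ → ℕ) (hφ : Function.Injective φ) (i : Fin 2) : Minj ℕ :=
  ⟨fun n => φ (i, n), fun _ _ hab => congrArg Prod.snd (hφ hab)⟩

lemma disjoint_phiC_ranges (φ : Fin 2 × ℕ → ℕ) (hφ : Function.Injective φ) :
    Disjoint (Set.range ⇑(phiC φ hφ 0)) (Set.range ⇑(phiC φ hφ 1)) := by
  rw [Set.disjoint_left]
  rintro b ⟨n, rfl⟩ ⟨m, hm⟩
  have h1 : (1 : Fin 2) = 0 := congrArg Prod.fst (hφ hm)
  exact absurd h1 (by decide)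

lemma range_mul_subset (u v : Minj ℕ) : Set.range ⇑(u * v) ⊆ Set.range ⇑u := by
  rintro b ⟨a, rfl⟩
  exact ⟨v a, rfl⟩

lemma range_mul_disjoint (u : Minj ℕ) {v w : Minj ℕ}
    (hd : Disjoint (Set.range ⇑v) (Set.range ⇑w)) :
    Disjoint (Set.range ⇑(u * v)) (Set.range ⇑(u * w)) := by
  rw [Set.disjoint_left] at hd ⊢
  rintro b ⟨a, rfl⟩ ⟨a', ha'⟩
  exact hd ⟨a, rfl⟩ ⟨a', u.2 ha'⟩

namespace ParSum

lemma supp_smul_subset (h : ParSum C) (w : Minj ℕ) (x : C) :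
    supp (U := ℕ) (w • x) ⊆ Set.range ⇑w := by
  obtain ⟨A, hA⟩ := h.tame x
  intro i hi
  have := hi (A.image ⇑w) (supported_image hA w)
  obtain ⟨a, _, rfl⟩ := Finset.mem_image.mp this
  exact ⟨a, rfl⟩

/-- Objects moved into disjoint ranges are disjointly supported. -/
lemma disj_smul (h : ParSum C) {w w' : Minj ℕ}
    (hd : Disjoint (Set.range ⇑w) (Set.range ⇑w')) (x y : C) :
    DisjSupp (w • x) (w' • y) :=
  Disjoint.mono (h.supp_smul_subset w x) (h.supp_smul_subset w' y) hd

lemma supported_add_finset (h : ParSum C) {x y : C} (hd : DisjSupp x y) {A B : Finset ℕ}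
    (hx : Supported (A : Set ℕ) x) (hy : Supported (B : Set ℕ) y) :
    Supported ((A ∪ B : Finset ℕ) : Set ℕ) (h.add x y) := by
  intro u hu
  rw [h.smul_add u hd, hx u (fun a ha => hu a (by simp [ha])),
    hy u (fun a ha => hu a (by simp [ha]))]

lemma supp_add_subset (h : ParSum C) {x y : C} (hd : DisjSupp x y) :
    supp (U := ℕ) (h.add x y) ⊆ supp (U := ℕ) x ∪ supp (U := ℕ) y := by
  intro i hi
  by_contra hc
  simp only [Set.mem_union, not_or] at hc
  obtain ⟨hcx, hcy⟩ := hc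
  simp only [supp, Set.mem_setOf_eq, not_forall] at hcx hcy
  obtain ⟨A', hA', hiA'⟩ := hcx
  obtain ⟨B', hB', hiB'⟩ := hcy
  have := hi (A' ∪ B') (h.supported_add_finset hd hA' hB')
  simp only [Finset.mem_union] at this
  tauto

lemma supp_add_smul_subset (h : ParSum C) (u v : Minj ℕ)
    (hd : Disjoint (Set.range ⇑u) (Set.range ⇑v)) (x y : C) :
    supp (U := ℕ) (h.add (u • x) (v • y)) ⊆ Set.range ⇑u ∪ Set.range ⇑v := by
  intro i hi
  have := h.supp_add_subset (h.disj_smul hd x y) hi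
  rcases this with hl | hr
  · exact Or.inl (h.supp_smul_subset u x hl)
  · exact Or.inr (h.supp_smul_subset v y hr)

lemma smul_zero' (h : ParSum C) (u : Minj ℕ) : u • h.zero = h.zero :=
  h.supp_zero u (fun a ha => absurd ha (Set.notMem_empty a))

lemma supp_zero_subset (h : ParSum C) : supp (U := ℕ) h.zero ⊆ (∅ : Set ℕ) := by
  intro i hi
  have := hi ∅ (by intro u _; exact h.smul_zero' u)
  simp at this

lemma disj_zero_right (h : ParSum C) (x : C) : DisjSupp x h.zero :=
  Disjoint.mono_right h.supp_zero_subset (by simp)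

lemma disj_zero_left (h : ParSum C) (x : C) : DisjSupp h.zero x :=
  Disjoint.mono_left h.supp_zero_subset (by simp)

end ParSum

end Phi

section MonDefs

variable {C : Type*} [Category C] [MulAction (Minj ℕ) C]

/-- The tensor product `φ_*(x,y) = φ¹ • x + φ² • y` on objects. -/
def Fobj (h : ParSum C) (φ : Fin 2 × ℕ → ℕ) (hφ : Function.Injective φ) (x y : C) : C := h.add (phiC φ hφ 0 • x) (phiC φ hφ 1 • y)

lemma d12 (h : ParSum C) (φ : Fin 2 × ℕ → ℕ) (hφ : Function.Injective φ) (x y : C) : DisjSupp (phiC φ hφ 0 • x) (phiC φ hφ 1 • y) :=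
  h.disj_smul (disjoint_phiC_ranges φ hφ) x y

lemma d21 (h : ParSum C) (φ : Fin 2 × ℕ → ℕ) (hφ : Function.Injective φ) (x y : C) : DisjSupp (phiC φ hφ 1 • x) (phiC φ hφ 0 • y) :=
  h.disj_smul (disjoint_phiC_ranges φ hφ).symm x y

/-- The tensor product `φ_*(f,g) = φ¹_*(f) + φ²_*(g)` on morphisms. -/
def Fhom (h : ParSum C) (φ : Fin 2 × ℕ → ℕ) (hφ : Function.Injective φ) {x x' y y' : C} (f : x ⟶ x') (g : y ⟶ y') :
    Fobj h φ hφ x y ⟶ Fobj h φ hφ x' y' :=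
  h.addHom (d12 h φ hφ x y) (d12 h φ hφ x' y')
    (h.toMCat.act (phiC φ hφ 0) f) (h.toMCat.act (phiC φ hφ 1) g)

/-- The symmetry isomorphism `τ_{x,y} = [φ∘t, φ]^{x,y} : φ_*(x,y) ⟶ φ_*(y,x)`. -/
def braiding (h : ParSum C) (φ : Fin 2 × ℕ → ℕ) (hφ : Function.Injective φ) (x y : C) : Fobj h φ hφ x y ⟶ Fobj h φ hφ y x :=
  h.addHom (d12 h φ hφ x y) (d21 h φ hφ x y)
    (h.toMCat.tw (phiC φ hφ 1) (phiC φ hφ 0) x) (h.toMCat.tw (phiC φ hφ 0) (phiC φ hφ 1) y) ≫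
    eqToHom (h.add_comm' (d21 h φ hφ x y))

lemma zero_right_eq (h : ParSum C) (φ : Fin 2 × ℕ → ℕ) (hφ : Function.Injective φ) (x : C) : phiC φ hφ 0 • x = Fobj h φ hφ x h.zero := by
  show _ = h.add _ _
  rw [h.smul_zero' (phiC φ hφ 1), h.add_zero']

lemma zero_left_eq (h : ParSum C) (φ : Fin 2 × ℕ → ℕ) (hφ : Function.Injective φ) (x : C) : phiC φ hφ 1 • x = Fobj h φ hφ h.zero x := by
  show _ = h.add _ _
  rw [h.smul_zero' (phiC φ hφ 0), h.zero_add']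

/-- The right unit isomorphism `[φ¹,1]^x : x ⟶ φ_*(x,0)`. -/
def rightUnitor (h : ParSum C) (φ : Fin 2 × ℕ → ℕ) (hφ : Function.Injective φ) (x : C) : x ⟶ Fobj h φ hφ x h.zero :=
  eqToHom (one_smul (Minj ℕ) x).symm ≫ h.toMCat.tw (phiC φ hφ 0) 1 x ≫
    eqToHom (zero_right_eq h φ hφ x)

/-- The left unit isomorphism `[φ²,1]^x : x ⟶ φ_*(0,x)`. -/
def leftUnitor (h : ParSum C) (φ : Fin 2 × ℕ → ℕ) (hφ : Function.Injective φ) (x : C) : x ⟶ Fobj h φ hφ h.zero x :=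
  eqToHom (one_smul (Minj ℕ) x).symm ≫ h.toMCat.tw (phiC φ hφ 1) 1 x ≫
    eqToHom (zero_left_eq h φ hφ x)

lemma d00_01 (h : ParSum C) (φ : Fin 2 × ℕ → ℕ) (hφ : Function.Injective φ) (x y : C) :
    DisjSupp ((phiC φ hφ 0 * phiC φ hφ 0) • x) ((phiC φ hφ 0 * phiC φ hφ 1) • y) :=
  h.disj_smul (range_mul_disjoint _ (disjoint_phiC_ranges φ hφ)) x y

lemma d10_11 (h : ParSum C) (φ : Fin 2 × ℕ → ℕ) (hφ : Function.Injective φ) (y z : C) :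
    DisjSupp ((phiC φ hφ 1 * phiC φ hφ 0) • y) ((phiC φ hφ 1 * phiC φ hφ 1) • z) :=
  h.disj_smul (range_mul_disjoint _ (disjoint_phiC_ranges φ hφ)) y z

lemma d0_10 (h : ParSum C) (φ : Fin 2 × ℕ → ℕ) (hφ : Function.Injective φ) (x y : C) : DisjSupp (phiC φ hφ 0 • x) ((phiC φ hφ 1 * phiC φ hφ 0) • y) :=
  h.disj_smul (Disjoint.mono_right (range_mul_subset _ _) (disjoint_phiC_ranges φ hφ)) x y

lemma d0_11 (h : ParSum C) (φ : Fin 2 × ℕ → ℕ) (hφ : Function.Injective φ) (x z : C) : DisjSupp (phiC φ hφ 0 • x) ((phiC φ hφ 1 * phiC φ hφ 1) • z) :=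
  h.disj_smul (Disjoint.mono_right (range_mul_subset _ _) (disjoint_phiC_ranges φ hφ)) x z

lemma dI1 (h : ParSum C) (φ : Fin 2 × ℕ → ℕ) (hφ : Function.Injective φ) (x y z : C) :
    DisjSupp (h.add ((phiC φ hφ 0 * phiC φ hφ 0) • x) ((phiC φ hφ 0 * phiC φ hφ 1) • y))
      (phiC φ hφ 1 • z) := by
  have h1 : supp (U := ℕ)
      (h.add ((phiC φ hφ 0 * phiC φ hφ 0) • x) ((phiC φ hφ 0 * phiC φ hφ 1) • y)) ⊆
      Set.range ⇑(phiC φ hφ 0) := by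
    intro i hi
    rcases h.supp_add_smul_subset _ _ (range_mul_disjoint _ (disjoint_phiC_ranges φ hφ)) x y hi
      with h2 | h2
    · exact range_mul_subset _ _ h2
    · exact range_mul_subset _ _ h2
  exact Disjoint.mono h1 (h.supp_smul_subset _ z) (disjoint_phiC_ranges φ hφ)

lemma dI2 (h : ParSum C) (φ : Fin 2 × ℕ → ℕ) (hφ : Function.Injective φ) (x y z : C) :
    DisjSupp (h.add (phiC φ hφ 0 • x) ((phiC φ hφ 1 * phiC φ hφ 0) • y))
      ((phiC φ hφ 1 * phiC φ hφ 1) • z) := by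
  have h1 : supp (U := ℕ)
      (h.add (phiC φ hφ 0 • x) ((phiC φ hφ 1 * phiC φ hφ 0) • y)) ⊆
      Set.range ⇑(phiC φ hφ 0) ∪ Set.range ⇑(phiC φ hφ 1 * phiC φ hφ 0) := by
    intro i hi
    exact h.supp_add_smul_subset _ _
      (Disjoint.mono_right (range_mul_subset _ _) (disjoint_phiC_ranges φ hφ)) x y hi
  refine Disjoint.mono h1 (h.supp_smul_subset _ z) (Set.disjoint_union_left.mpr ⟨?_, ?_⟩)
  · exact Disjoint.mono_right (range_mul_subset _ _) (disjoint_phiC_ranges φ hφ)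
  · exact range_mul_disjoint _ (disjoint_phiC_ranges φ hφ)

lemma dI3 (h : ParSum C) (φ : Fin 2 × ℕ → ℕ) (hφ : Function.Injective φ) (x y z : C) :
    DisjSupp (phiC φ hφ 0 • x)
      (h.add ((phiC φ hφ 1 * phiC φ hφ 0) • y) ((phiC φ hφ 1 * phiC φ hφ 1) • z)) := by
  have h1 : supp (U := ℕ)
      (h.add ((phiC φ hφ 1 * phiC φ hφ 0) • y) ((phiC φ hφ 1 * phiC φ hφ 1) • z)) ⊆
      Set.range ⇑(phiC φ hφ 1) := by
    intro i hi
    rcases h.supp_add_smul_subset _ _ (range_mul_disjoint _ (disjoint_phiC_ranges φ hφ)) y z hi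
      with h2 | h2
    · exact range_mul_subset _ _ h2
    · exact range_mul_subset _ _ h2
  exact Disjoint.mono (h.supp_smul_subset _ x) h1 (disjoint_phiC_ranges φ hφ)

lemma assocSrc_eq (h : ParSum C) (φ : Fin 2 × ℕ → ℕ) (hφ : Function.Injective φ) (x y z : C) :
    Fobj h φ hφ (Fobj h φ hφ x y) z =
      h.add (h.add ((phiC φ hφ 0 * phiC φ hφ 0) • x) ((phiC φ hφ 0 * phiC φ hφ 1) • y))
        (phiC φ hφ 1 • z) := by
  show h.add (phiC φ hφ 0 • h.add (phiC φ hφ 0 • x) (phiC φ hφ 1 • y)) (phiC φ hφ 1 • z) = _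
  rw [h.smul_add (phiC φ hφ 0) (d12 h φ hφ x y), ← mul_smul, ← mul_smul]

lemma assocTgt_eq (h : ParSum C) (φ : Fin 2 × ℕ → ℕ) (hφ : Function.Injective φ) (x y z : C) :
    Fobj h φ hφ x (Fobj h φ hφ y z) =
      h.add (phiC φ hφ 0 • x)
        (h.add ((phiC φ hφ 1 * phiC φ hφ 0) • y) ((phiC φ hφ 1 * phiC φ hφ 1) • z)) := by
  show h.add (phiC φ hφ 0 • x) (phiC φ hφ 1 • h.add (phiC φ hφ 0 • y) (phiC φ hφ 1 • z)) = _
  rw [h.smul_add (phiC φ hφ 1) (d12 h φ hφ y z), ← mul_smul, ← mul_smul]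

lemma assocMid_eq (h : ParSum C) (φ : Fin 2 × ℕ → ℕ) (hφ : Function.Injective φ) (x y z : C) :
    h.add (h.add (phiC φ hφ 0 • x) ((phiC φ hφ 1 * phiC φ hφ 0) • y))
        ((phiC φ hφ 1 * phiC φ hφ 1) • z) =
      h.add (phiC φ hφ 0 • x)
        (h.add ((phiC φ hφ 1 * phiC φ hφ 0) • y) ((phiC φ hφ 1 * phiC φ hφ 1) • z)) :=
  h.add_assoc' (d0_10 h φ hφ x y) (d10_11 h φ hφ y z) (d0_11 h φ hφ x z)

/-- The associativity isomorphism
`α_{x,y,z} = [φ(1⊔φ), φ(φ⊔1)]^{x,y,z} : φ_*(φ_*(x,y),z) ⟶ φ_*(x,φ_*(y,z))`. -/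
def phiAssociator (h : ParSum C) (φ : Fin 2 × ℕ → ℕ) (hφ : Function.Injective φ) (x y z : C) :
    Fobj h φ hφ (Fobj h φ hφ x y) z ⟶ Fobj h φ hφ x (Fobj h φ hφ y z) :=
  eqToHom (assocSrc_eq h φ hφ x y z) ≫
    h.addHom (dI1 h φ hφ x y z) (dI2 h φ hφ x y z)
      (h.addHom (d00_01 h φ hφ x y) (d0_10 h φ hφ x y)
        (h.toMCat.tw (phiC φ hφ 0) (phiC φ hφ 0 * phiC φ hφ 0) x)
        (h.toMCat.tw (phiC φ hφ 1 * phiC φ hφ 0) (phiC φ hφ 0 * phiC φ hφ 1) y))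
      (h.toMCat.tw (phiC φ hφ 1 * phiC φ hφ 1) (phiC φ hφ 1) z) ≫
    eqToHom ((assocMid_eq h φ hφ x y z).trans (assocTgt_eq h φ hφ x y z).symm)

end MonDefs

/-- The natural isomorphism `[ψ,φ]^{x,y} : φ_*(x,y) ⟶ ψ_*(x,y)`, the monoidal structure
isomorphism of the identity functor from `φ^*(C)` to `ψ^*(C)`. -/
def mixTw {C : Type*} [Category C] [MulAction (Minj ℕ) C] (h : ParSum C)
    (φ : Fin 2 × ℕ → ℕ) (hφ : Function.Injective φ)
    (ψ : Fin 2 × ℕ → ℕ) (hψ : Function.Injective ψ) (x y : C) :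
    Fobj h φ hφ x y ⟶ Fobj h ψ hψ x y :=
  h.addHom (d12 h φ hφ x y) (d12 h ψ hψ x y)
    (h.toMCat.tw (phiC ψ hψ 0) (phiC φ hφ 0) x) (h.toMCat.tw (phiC ψ hψ 1) (phiC φ hφ 1) y)

namespace MCat

variable {U : Type*} {C : Type*} [Category C] [MulAction (Minj U) C] (h : MCat U C)

@[simp]
lemma tw_comp_tw (w v u : Minj U) (x : C) : h.tw v u x ≫ h.tw w v x = h.tw w u x := by
  simp [tw]

@[simp]
lemma tw_comp_tw_assoc (w v u : Minj U) (x : C) {y : C} (f : w • x ⟶ y) :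
    h.tw v u x ≫ h.tw w v x ≫ f = h.tw w u x ≫ f := by
  rw [← Category.assoc, tw_comp_tw]

@[simp]
lemma tw_self (u : Minj U) (x : C) : h.tw u u x = 𝟙 (u • x) := by
  simp [tw]

lemma ι_smul (u w : Minj U) (x : C) :
    (h.ι u (w • x)).hom = (h.ι w x).inv ≫ (h.ι (u * w) x).hom ≫ eqToHom (mul_smul u w x) := by
  rw [Iso.eq_inv_comp]
  exact h.ι_mul w u x

lemma ι_smul_inv (u w : Minj U) (x : C) :
    (h.ι u (w • x)).inv =
      eqToHom (mul_smul u w x).symm ≫ (h.ι (u * w) x).inv ≫ (h.ι w x).hom := by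
  rw [← cancel_epi (h.ι u (w • x)).hom, Iso.hom_inv_id, ι_smul]
  simp

lemma tw_smul (v u w : Minj U) (x : C) :
    h.tw v u (w • x) =
      eqToHom (mul_smul u w x).symm ≫ h.tw (v * w) (u * w) x ≫ eqToHom (mul_smul v w x) := by
  simp [tw, ι_smul, ι_smul_inv]

lemma act_tw (w v u : Minj U) (x : C) :
    h.act w (h.tw v u x) =
      eqToHom (mul_smul w u x).symm ≫ h.tw (w * v) (w * u) x ≫ eqToHom (mul_smul w v x) := by
  simp [act, tw, ι_smul, ι_smul_inv]

end MCat

namespace ParSum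

variable {C : Type*} [Category C] [MulAction (Minj ℕ) C] (h : ParSum C)

lemma supp_smul_subset_image (h : ParSum C) (u : Minj ℕ) (x : C) :
    supp (U := ℕ) (u • x) ⊆ u '' supp (U := ℕ) x := by
  intro i hi
  obtain ⟨A, hA⟩ := h.tame x
  obtain ⟨a, -, rfl⟩ := Finset.mem_image.mp (hi (A.image u) (supported_image hA u))
  refine ⟨a, fun B hB => ?_, rfl⟩
  obtain ⟨b, hbB, hba⟩ := Finset.mem_image.mp (hi (B.image u) (supported_image hB u))
  exact u.2 hba ▸ hbB

lemma disjSupp_smul (h : ParSum C) (u : Minj ℕ) {x y : C} (hxy : DisjSupp x y) :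
    DisjSupp (u • x) (u • y) :=
  ((Set.disjoint_image_iff u.2).mpr hxy).mono (h.supp_smul_subset_image u x)
    (h.supp_smul_subset_image u y)

lemma disjSupp_add_smul {u v w : Minj ℕ} (huv : Disjoint (Set.range u) (Set.range v))
    (huw : Disjoint (Set.range u) (Set.range w)) (hvw : Disjoint (Set.range v) (Set.range w))
    (x y z : C) : DisjSupp (h.add (u • x) (v • y)) (w • z) :=
  (Set.disjoint_union_left.mpr ⟨huw, hvw⟩).mono (h.supp_add_smul_subset u v huv x y)
    (h.supp_smul_subset w z)

lemma disjSupp_smul_add {u v w : Minj ℕ} (huv : Disjoint (Set.range u) (Set.range v))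
    (huw : Disjoint (Set.range u) (Set.range w)) (hvw : Disjoint (Set.range v) (Set.range w))
    (x y z : C) : DisjSupp (u • x) (h.add (v • y) (w • z)) :=
  (Set.disjoint_union_right.mpr ⟨huv, huw⟩).mono (h.supp_smul_subset u x)
    (h.supp_add_smul_subset v w hvw y z)

lemma addHom_conj {x x' y y' p p' q q' : C}
    (hx : DisjSupp x x') (hy : DisjSupp y y') (hp : DisjSupp p p') (hq : DisjSupp q q')
    (e₁ : x = p) (e₂ : q = y) (e₃ : x' = p') (e₄ : q' = y') (f : p ⟶ q) (g : p' ⟶ q') :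
    h.addHom hx hy (eqToHom e₁ ≫ f ≫ eqToHom e₂) (eqToHom e₃ ≫ g ≫ eqToHom e₄) =
      eqToHom (by rw [e₁, e₃]) ≫ h.addHom hp hq f g ≫ eqToHom (by rw [e₂, e₄]) := by
  subst e₁ e₂ e₃ e₄
  simp

lemma addHom_conj_left {x x' y y' p q : C}
    (hx : DisjSupp x x') (hy : DisjSupp y y') (hp : DisjSupp p x') (hq : DisjSupp q y')
    (e₁ : x = p) (e₂ : q = y) (f : p ⟶ q) (g : x' ⟶ y') :
    h.addHom hx hy (eqToHom e₁ ≫ f ≫ eqToHom e₂) g =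
      eqToHom (by rw [e₁]) ≫ h.addHom hp hq f g ≫ eqToHom (by rw [e₂]) := by
  subst e₁ e₂
  simp

lemma addHom_conj_right {x x' y y' p' q' : C}
    (hx : DisjSupp x x') (hy : DisjSupp y y') (hp : DisjSupp x p') (hq : DisjSupp y q')
    (e₃ : x' = p') (e₄ : q' = y') (f : x ⟶ y) (g : p' ⟶ q') :
    h.addHom hx hy f (eqToHom e₃ ≫ g ≫ eqToHom e₄) =
      eqToHom (by rw [e₃]) ≫ h.addHom hp hq f g ≫ eqToHom (by rw [e₄]) := by
  subst e₃ e₄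
  simp

/-- Up to `u • 0 = 0`, `ι(u, 0)` is an isomorphism `F : 0 ⟶ 0`; since `0 + 0 = 0`, the sum
axiom for `ι` and the unit laws give `F = F + F = (1 + F) ∘ (F + 1) = F ∘ F`. -/
lemma ι_zero (u : Minj ℕ) : (h.ι u h.zero).hom = eqToHom (h.smul_zero' u).symm := by
  set F := (h.ι u h.zero).hom ≫ eqToHom (h.smul_zero' u)
  have d : DisjSupp h.zero h.zero := h.disj_zero_left h.zero
  have hι : (h.ι u h.zero).hom = eqToHom rfl ≫ F ≫ eqToHom (h.smul_zero' u).symm := by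
    simp [F]
  have hFF : F ≫ F = F := by
    have hsum : h.addHom d d F F = h.addHom d d F (𝟙 _) ≫ h.addHom d d (𝟙 _) F := by
      rw [← h.addHom_comp]
      simp
    rw [h.addHom_zero, h.zero_addHom] at hsum
    have hcongr (a : C) (e : a = h.zero) : (h.ι u a).hom =
        eqToHom e ≫ (h.ι u h.zero).hom ≫ eqToHom (congrArg (u • ·) e.symm) := by
      subst e
      simp
    have key := h.ι_add u d (h.disjSupp_smul u d)
    rw [hι, h.addHom_conj _ _ d d, hsum, hcongr _ (h.add_zero' _), hι] at key
    simp only [Category.assoc, eqToHom_trans, eqToHom_trans_assoc, eqToHom_refl,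
      Category.id_comp] at key
    rwa [cancel_epi, ← Category.assoc, cancel_mono, eq_comm] at key
  have hF : F = 𝟙 _ := by rwa [← cancel_epi F, Category.comp_id]
  rw [hι, hF]
  simp

lemma tw_zero (v u : Minj ℕ) :
    h.tw v u h.zero = eqToHom (by rw [h.smul_zero', h.smul_zero']) := by
  have hinv : (h.ι u h.zero).inv = eqToHom (h.smul_zero' u) := by
    rw [← cancel_epi (h.ι u h.zero).hom, Iso.hom_inv_id, h.ι_zero]
    simp
  simp [MCat.tw, h.ι_zero, hinv]

lemma addHom_eqToHom_zero_right {x y a b : C} (hx : DisjSupp x a) (hy : DisjSupp y b)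
    (f : x ⟶ y) (ha : a = h.zero) (hb : b = h.zero) (e : a = b) :
    h.addHom hx hy f (eqToHom e) =
      eqToHom (by rw [ha, h.add_zero']) ≫ f ≫ eqToHom (by rw [hb, h.add_zero']) := by
  subst ha hb
  simpa using h.addHom_zero hx hy f

lemma addHom_eqToHom_zero_left {x y a b : C} (hx : DisjSupp a x) (hy : DisjSupp b y)
    (f : x ⟶ y) (ha : a = h.zero) (hb : b = h.zero) (e : a = b) :
    h.addHom hx hy (eqToHom e) f =
      eqToHom (by rw [ha, h.zero_add']) ≫ f ≫ eqToHom (by rw [hb, h.zero_add']) := by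
  subst ha hb
  simpa using h.zero_addHom hx hy f

lemma ι_add_inv (u : Minj ℕ) {x y : C} (hxy : DisjSupp x y) (hu : DisjSupp (u • x) (u • y)) :
    (h.ι u (h.add x y)).inv =
      eqToHom (h.smul_add u hxy) ≫ h.addHom hu hxy (h.ι u x).inv (h.ι u y).inv := by
  rw [← cancel_epi (h.ι u (h.add x y)).hom, Iso.hom_inv_id, h.ι_add u hxy hu]
  simp [← h.addHom_comp, h.addHom_id]

lemma tw_add (v u : Minj ℕ) {x y : C} (hxy : DisjSupp x y)
    (hu : DisjSupp (u • x) (u • y)) (hv : DisjSupp (v • x) (v • y)) :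
    h.tw v u (h.add x y) =
      eqToHom (h.smul_add u hxy) ≫ h.addHom hu hv (h.tw v u x) (h.tw v u y) ≫
        eqToHom (h.smul_add v hxy).symm := by
  rw [MCat.tw, MCat.tw, MCat.tw, h.addHom_comp hu hxy hv]
  simp [h.ι_add v hxy hv, h.ι_add_inv u hxy hu]

lemma addHom_tw_comp_addHom_tw {u u' v v' w w' : Minj ℕ} {x y : C}
    (hu : DisjSupp (u • x) (u' • y)) (hv : DisjSupp (v • x) (v' • y))
    (hw : DisjSupp (w • x) (w' • y)) :
    h.addHom hu hv (h.tw v u x) (h.tw v' u' y) ≫ h.addHom hv hw (h.tw w v x) (h.tw w' v' y) =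
      h.addHom hu hw (h.tw w u x) (h.tw w' u' y) := by
  rw [← h.addHom_comp, MCat.tw_comp_tw, MCat.tw_comp_tw]

lemma disjSupp_mul_phiC (h : ParSum C) (φ : Fin 2 × ℕ → ℕ) (hφ : Function.Injective φ)
    (u : Minj ℕ) (x y : C) : DisjSupp ((u * phiC φ hφ 0) • x) ((u * phiC φ hφ 1) • y) :=
  h.disj_smul (range_mul_disjoint u (disjoint_phiC_ranges φ hφ)) x y

section Twists

variable (φ : Fin 2 × ℕ → ℕ) (hφ : Function.Injective φ)
  (ψ : Fin 2 × ℕ → ℕ) (hψ : Function.Injective ψ)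

lemma smul_Fobj (u : Minj ℕ) (x y : C) :
    u • Fobj h φ hφ x y = h.add ((u * phiC φ hφ 0) • x) ((u * phiC φ hφ 1) • y) := by
  rw [Fobj, h.smul_add u (d12 h φ hφ x y), mul_smul, mul_smul]

lemma tw_Fobj (v u : Minj ℕ) (x y : C) :
    h.tw v u (Fobj h φ hφ x y) =
      eqToHom (h.smul_Fobj φ hφ u x y) ≫
        h.addHom (h.disjSupp_mul_phiC φ hφ u x y) (h.disjSupp_mul_phiC φ hφ v x y)
          (h.tw (v * phiC φ hφ 0) (u * phiC φ hφ 0) x)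
          (h.tw (v * phiC φ hφ 1) (u * phiC φ hφ 1) y) ≫
        eqToHom (h.smul_Fobj φ hφ v x y).symm := by
  dsimp only [Fobj]
  rw [h.tw_add v u (d12 h φ hφ x y) (h.disjSupp_smul u (d12 h φ hφ x y))
    (h.disjSupp_smul v (d12 h φ hφ x y)), MCat.tw_smul, MCat.tw_smul,
    h.addHom_conj _ _ (h.disjSupp_mul_phiC φ hφ u x y) (h.disjSupp_mul_phiC φ hφ v x y)]
  simp

lemma act_mixTw (w : Minj ℕ) (x y : C) :
    h.act w (mixTw h φ hφ ψ hψ x y) =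
      eqToHom (h.smul_Fobj φ hφ w x y) ≫
        h.addHom (h.disjSupp_mul_phiC φ hφ w x y) (h.disjSupp_mul_phiC ψ hψ w x y)
          (h.tw (w * phiC ψ hψ 0) (w * phiC φ hφ 0) x)
          (h.tw (w * phiC ψ hψ 1) (w * phiC φ hφ 1) y) ≫
        eqToHom (h.smul_Fobj ψ hψ w x y).symm := by
  dsimp only [mixTw, Fobj]
  rw [h.act_add w _ _ (h.disjSupp_smul w (d12 h φ hφ x y))
    (h.disjSupp_smul w (d12 h ψ hψ x y)), MCat.act_tw, MCat.act_tw,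
    h.addHom_conj _ _ (h.disjSupp_mul_phiC φ hφ w x y) (h.disjSupp_mul_phiC ψ hψ w x y)]
  simp

end Twists

end ParSum

/-- Three injections `ℕ → ℕ` with pairwise disjoint ranges, i.e. an injection
`{1,2,3} × ℕ → ℕ`. -/
structure InjTriple where
  fst : Minj ℕ
  snd : Minj ℕ
  thd : Minj ℕ
  disjoint_fst_snd : Disjoint (Set.range fst) (Set.range snd)
  disjoint_fst_thd : Disjoint (Set.range fst) (Set.range thd)
  disjoint_snd_thd : Disjoint (Set.range snd) (Set.range thd)

namespace InjTriple

/-- `φ(χ ⊔ 1)` -/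
abbrev nestLeft (φ : Fin 2 × ℕ → ℕ) (hφ : Function.Injective φ)
    (χ : Fin 2 × ℕ → ℕ) (hχ : Function.Injective χ) : InjTriple where
  fst := phiC φ hφ 0 * phiC χ hχ 0
  snd := phiC φ hφ 0 * phiC χ hχ 1
  thd := phiC φ hφ 1
  disjoint_fst_snd := range_mul_disjoint _ (disjoint_phiC_ranges χ hχ)
  disjoint_fst_thd := (disjoint_phiC_ranges φ hφ).mono_left (range_mul_subset _ _)
  disjoint_snd_thd := (disjoint_phiC_ranges φ hφ).mono_left (range_mul_subset _ _)

/-- `φ(1 ⊔ χ)` -/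
abbrev nestRight (φ : Fin 2 × ℕ → ℕ) (hφ : Function.Injective φ)
    (χ : Fin 2 × ℕ → ℕ) (hχ : Function.Injective χ) : InjTriple where
  fst := phiC φ hφ 0
  snd := phiC φ hφ 1 * phiC χ hχ 0
  thd := phiC φ hφ 1 * phiC χ hχ 1
  disjoint_fst_snd := (disjoint_phiC_ranges φ hφ).mono_right (range_mul_subset _ _)
  disjoint_fst_thd := (disjoint_phiC_ranges φ hφ).mono_right (range_mul_subset _ _)
  disjoint_snd_thd := range_mul_disjoint _ (disjoint_phiC_ranges χ hχ)

end InjTriple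

namespace ParSum

variable {C : Type*} [Category C] [MulAction (Minj ℕ) C] (h : ParSum C)

lemma disjSupp_fst_snd (h : ParSum C) (t : InjTriple) (x y : C) :
    DisjSupp (t.fst • x) (t.snd • y) :=
  h.disj_smul t.disjoint_fst_snd x y

lemma disjSupp_snd_thd (h : ParSum C) (t : InjTriple) (y z : C) :
    DisjSupp (t.snd • y) (t.thd • z) :=
  h.disj_smul t.disjoint_snd_thd y z

lemma disjSupp_add_thd (t : InjTriple) (x y z : C) :
    DisjSupp (h.add (t.fst • x) (t.snd • y)) (t.thd • z) :=
  h.disjSupp_add_smul t.disjoint_fst_snd t.disjoint_fst_thd t.disjoint_snd_thd x y z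

lemma disjSupp_fst_add (t : InjTriple) (x y z : C) :
    DisjSupp (t.fst • x) (h.add (t.snd • y) (t.thd • z)) :=
  h.disjSupp_smul_add t.disjoint_fst_snd t.disjoint_fst_thd t.disjoint_snd_thd x y z

/-- `t_*(x, y, z)`, reducible so that rewriting sees through it to the sum it abbreviates. -/
abbrev tripleObj (t : InjTriple) (x y z : C) : C :=
  h.add (h.add (t.fst • x) (t.snd • y)) (t.thd • z)

/-- The twist `[t', t]^{x,y,z}`. -/
def tripleTw (t t' : InjTriple) (x y z : C) : h.tripleObj t x y z ⟶ h.tripleObj t' x y z :=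
  h.addHom (h.disjSupp_add_thd t x y z) (h.disjSupp_add_thd t' x y z)
    (h.addHom (h.disjSupp_fst_snd t x y) (h.disjSupp_fst_snd t' x y)
      (h.tw t'.fst t.fst x) (h.tw t'.snd t.snd y))
    (h.tw t'.thd t.thd z)

@[simp]
lemma tripleTw_comp_tripleTw (r s t : InjTriple) (x y z : C) :
    h.tripleTw r s x y z ≫ h.tripleTw s t x y z = h.tripleTw r t x y z := by
  rw [tripleTw, tripleTw, ← h.addHom_comp, h.addHom_tw_comp_addHom_tw, MCat.tw_comp_tw]
  rfl

@[simp]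
lemma tripleTw_comp_tripleTw_assoc (r s t : InjTriple) (x y z : C) {w : C}
    (f : h.tripleObj t x y z ⟶ w) :
    h.tripleTw r s x y z ≫ h.tripleTw s t x y z ≫ f = h.tripleTw r t x y z ≫ f := by
  rw [← Category.assoc, tripleTw_comp_tripleTw]

lemma tripleObj_eq_add_add (t : InjTriple) (x y z : C) :
    h.tripleObj t x y z = h.add (t.fst • x) (h.add (t.snd • y) (t.thd • z)) :=
  h.add_assoc' (h.disjSupp_fst_snd t x y) (h.disjSupp_snd_thd t y z)
    (h.disj_smul t.disjoint_fst_thd x z)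

lemma tripleTw_eq_addHom_addHom (s t : InjTriple) (x y z : C) :
    h.tripleTw s t x y z = eqToHom (h.tripleObj_eq_add_add s x y z) ≫
      h.addHom (h.disjSupp_fst_add s x y z) (h.disjSupp_fst_add t x y z) (h.tw t.fst s.fst x)
        (h.addHom (h.disjSupp_snd_thd s y z) (h.disjSupp_snd_thd t y z)
          (h.tw t.snd s.snd y) (h.tw t.thd s.thd z)) ≫
      eqToHom (h.tripleObj_eq_add_add t x y z).symm := by
  rw [tripleTw, h.addHom_assoc (hxz := h.disj_smul s.disjoint_fst_thd x z)
    (hxz' := h.disj_smul t.disjoint_fst_thd x z)]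

section Coherence

open InjTriple

variable (φ : Fin 2 × ℕ → ℕ) (hφ : Function.Injective φ)
  (χ : Fin 2 × ℕ → ℕ) (hχ : Function.Injective χ) (ψ : Fin 2 × ℕ → ℕ) (hψ : Function.Injective ψ)
  (x y z : C)

lemma Fobj_Fobj_left :
    Fobj h φ hφ (Fobj h χ hχ x y) z = h.tripleObj (nestLeft φ hφ χ hχ) x y z := by
  rw [Fobj, smul_Fobj]

lemma Fobj_Fobj_right :
    Fobj h φ hφ x (Fobj h χ hχ y z) = h.tripleObj (nestRight φ hφ χ hχ) x y z := by
  rw [Fobj, smul_Fobj, tripleObj_eq_add_add]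

lemma mixTw_Fobj_left :
    mixTw h φ hφ ψ hψ (Fobj h χ hχ x y) z =
      eqToHom (h.Fobj_Fobj_left φ hφ χ hχ x y z) ≫
        h.tripleTw (nestLeft φ hφ χ hχ) (nestLeft ψ hψ χ hχ) x y z ≫
        eqToHom (h.Fobj_Fobj_left ψ hψ χ hχ x y z).symm := by
  dsimp only [mixTw]
  rw [tw_Fobj]
  exact h.addHom_conj_left _ _ (h.disjSupp_add_thd (nestLeft φ hφ χ hχ) x y z)
    (h.disjSupp_add_thd (nestLeft ψ hψ χ hχ) x y z) _ _ _ _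

lemma mixTw_Fobj_right :
    mixTw h φ hφ ψ hψ x (Fobj h χ hχ y z) =
      eqToHom (h.Fobj_Fobj_right φ hφ χ hχ x y z) ≫
        h.tripleTw (nestRight φ hφ χ hχ) (nestRight ψ hψ χ hχ) x y z ≫
        eqToHom (h.Fobj_Fobj_right ψ hψ χ hχ x y z).symm := by
  dsimp only [mixTw]
  rw [tw_Fobj, h.addHom_conj_right _ _ (h.disjSupp_fst_add (nestRight φ hφ χ hχ) x y z)
    (h.disjSupp_fst_add (nestRight ψ hψ χ hχ) x y z), tripleTw_eq_addHom_addHom]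
  simp only [Category.assoc, eqToHom_trans, eqToHom_trans_assoc]
  rfl

lemma Fhom_mixTw_id :
    Fhom h χ hχ (mixTw h φ hφ ψ hψ x y) (𝟙 z) =
      eqToHom (h.Fobj_Fobj_left χ hχ φ hφ x y z) ≫
        h.tripleTw (nestLeft χ hχ φ hφ) (nestLeft χ hχ ψ hψ) x y z ≫
        eqToHom (h.Fobj_Fobj_left χ hχ ψ hψ x y z).symm := by
  dsimp only [Fhom]
  rw [act_mixTw, MCat.act_id, ← MCat.tw_self]
  exact h.addHom_conj_left _ _ (h.disjSupp_add_thd (nestLeft χ hχ φ hφ) x y z)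
    (h.disjSupp_add_thd (nestLeft χ hχ ψ hψ) x y z) _ _ _ _

lemma Fhom_id_mixTw :
    Fhom h χ hχ (𝟙 x) (mixTw h φ hφ ψ hψ y z) =
      eqToHom (h.Fobj_Fobj_right χ hχ φ hφ x y z) ≫
        h.tripleTw (nestRight χ hχ φ hφ) (nestRight χ hχ ψ hψ) x y z ≫
        eqToHom (h.Fobj_Fobj_right χ hχ ψ hψ x y z).symm := by
  dsimp only [Fhom]
  rw [act_mixTw, MCat.act_id, ← MCat.tw_self, h.addHom_conj_right _ _
    (h.disjSupp_fst_add (nestRight χ hχ φ hφ) x y z)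
    (h.disjSupp_fst_add (nestRight χ hχ ψ hψ) x y z), tripleTw_eq_addHom_addHom]
  simp only [Category.assoc, eqToHom_trans, eqToHom_trans_assoc]
  rfl

lemma phiAssociator_eq :
    phiAssociator h φ hφ x y z =
      eqToHom (h.Fobj_Fobj_left φ hφ φ hφ x y z) ≫
        h.tripleTw (nestLeft φ hφ φ hφ) (nestRight φ hφ φ hφ) x y z ≫
        eqToHom (h.Fobj_Fobj_right φ hφ φ hφ x y z).symm :=
  rfl

lemma mixTw_associativity :
    mixTw h φ hφ ψ hψ (Fobj h φ hφ x y) z ≫ Fhom h ψ hψ (mixTw h φ hφ ψ hψ x y) (𝟙 z) ≫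
        phiAssociator h ψ hψ x y z =
      phiAssociator h φ hφ x y z ≫ mixTw h φ hφ ψ hψ x (Fobj h φ hφ y z) ≫
        Fhom h ψ hψ (𝟙 x) (mixTw h φ hφ ψ hψ y z) := by
  rw [mixTw_Fobj_left, Fhom_mixTw_id, phiAssociator_eq, phiAssociator_eq, mixTw_Fobj_right,
    Fhom_id_mixTw]
  simp

lemma mixTw_zero_right :
    mixTw h φ hφ ψ hψ x h.zero = eqToHom (zero_right_eq h φ hφ x).symm ≫
      h.tw (phiC ψ hψ 0) (phiC φ hφ 0) x ≫ eqToHom (zero_right_eq h ψ hψ x) := by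
  rw [mixTw, tw_zero]
  exact h.addHom_eqToHom_zero_right _ _ _ (h.smul_zero' _) (h.smul_zero' _) _

lemma mixTw_zero_left :
    mixTw h φ hφ ψ hψ h.zero x = eqToHom (zero_left_eq h φ hφ x).symm ≫
      h.tw (phiC ψ hψ 1) (phiC φ hφ 1) x ≫ eqToHom (zero_left_eq h ψ hψ x) := by
  rw [mixTw, tw_zero]
  exact h.addHom_eqToHom_zero_left _ _ _ (h.smul_zero' _) (h.smul_zero' _) _

lemma mixTw_right_unitality :
    rightUnitor h φ hφ x ≫ mixTw h φ hφ ψ hψ x h.zero = rightUnitor h ψ hψ x := by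
  simp [rightUnitor, mixTw_zero_right]

lemma mixTw_left_unitality :
    leftUnitor h φ hφ x ≫ mixTw h φ hφ ψ hψ h.zero x = leftUnitor h ψ hψ x := by
  simp [leftUnitor, mixTw_zero_left]

lemma mixTw_braiding :
    mixTw h φ hφ ψ hψ x y ≫ braiding h ψ hψ x y =
      braiding h φ hφ x y ≫ mixTw h φ hφ ψ hψ y x := by
  dsimp only [mixTw, braiding, Fobj]
  rw [h.addHom_comm (d21 h φ hφ x y) (d21 h ψ hψ x y)]
  simp only [Category.assoc, eqToHom_trans_assoc, eqToHom_refl, Category.id_comp]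
  rw [← Category.assoc, addHom_tw_comp_addHom_tw, ← Category.assoc, addHom_tw_comp_addHom_tw]

end Coherence

end ParSum

/-- For two injections `φ, ψ : {1,2} × ℕ → ℕ`, the identity functor of `C` together with
the isomorphisms `[ψ,φ]^{x,y}` and the identity of `0` is a strong symmetric monoidal
functor `φ^*(C) → ψ^*(C)`: the isomorphisms `[ψ,φ]` are compatible with the unit,
associativity and symmetry isomorphisms of the two symmetric monoidal structures. -/
theorem stmt3 (C : Type*) [Category C] [MulAction (Minj ℕ) C] (h : ParSum C)
    (φ : Fin 2 × ℕ → ℕ) (hφ : Function.Injective φ)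
    (ψ : Fin 2 × ℕ → ℕ) (hψ : Function.Injective ψ) :
    -- compatibility with the right unit isomorphisms
    (∀ x : C, rightUnitor h φ hφ x ≫ mixTw h φ hφ ψ hψ x h.zero = rightUnitor h ψ hψ x) ∧
    -- compatibility with the left unit isomorphisms
    (∀ x : C, leftUnitor h φ hφ x ≫ mixTw h φ hφ ψ hψ h.zero x = leftUnitor h ψ hψ x) ∧
    -- compatibility with the associativity isomorphisms
    (∀ x y z : C,
      mixTw h φ hφ ψ hψ (Fobj h φ hφ x y) z ≫
          Fhom h ψ hψ (mixTw h φ hφ ψ hψ x y) (𝟙 z) ≫ phiAssociator h ψ hψ x y z =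
        phiAssociator h φ hφ x y z ≫ mixTw h φ hφ ψ hψ x (Fobj h φ hφ y z) ≫
          Fhom h ψ hψ (𝟙 x) (mixTw h φ hφ ψ hψ y z)) ∧
    -- compatibility with the symmetry isomorphisms
    (∀ x y : C,
      mixTw h φ hφ ψ hψ x y ≫ braiding h ψ hψ x y =
        braiding h φ hφ x y ≫ mixTw h φ hφ ψ hψ y x) :=
  ⟨h.mixTw_right_unitality φ hφ ψ hψ, h.mixTw_left_unitality φ hφ ψ hψ,
    h.mixTw_associativity φ hφ ψ hψ, h.mixTw_braiding φ hφ ψ hψ⟩
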